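/- arXiv:1406.0049 — 3 statements merged into one kernel-verified Lean document; each statement's English description precedes it below -/
import Mathlib

section
/- For a Gamma random variable X with integer shape N ≥ 1 and rate 1/ρ (ρ > 0), E[ln(1+X)] = e^{1/ρ} Σ_{k=0}^{N−1} ρ^{−k} Γ(−k, 1/ρ), where Γ(·,·) is the upper incomplete gamma function. -/
open MeasureTheory

/-- Upper incomplete gamma function `Γ(a, z) = ∫_z^∞ t^(a-1) e^(-t) dt`,
convergent for `z > 0` even when `a` is a nonpositive real. -/
noncomputable def upperGamma (a z : ℝ) : ℝ :=
  ∫ t in Set.Ioi z, t ^ (a - 1) * Real.exp (-t)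

open Real Set Filter

noncomputable def aI (ρ : ℝ) (k : ℕ) : ℝ :=
  ∫ x in Set.Ioi (0:ℝ), x ^ k * Real.exp (-x / ρ) / (1 + x)
noncomputable def jI (ρ : ℝ) (k : ℕ) : ℝ :=
  ∫ x in Set.Ioi (0:ℝ), Real.exp (-x / ρ) / (1 + x) ^ (k+1)
noncomputable def lI (ρ : ℝ) (n : ℕ) : ℝ :=
  ∫ x in Set.Ioi (0:ℝ), Real.log (1 + x) * (x ^ n * Real.exp (-x / ρ))

variable {ρ : ℝ}

lemma EG.intPow (hρ : 0 < ρ) (n : ℕ) :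
    IntegrableOn (fun x : ℝ => x ^ n * Real.exp (-x / ρ)) (Set.Ioi 0) := by
  have h0 : (0:ℝ) < 1/ρ := by positivity
  have h := Real.GammaIntegral_convergent (s := (n+1:ℝ)) (by positivity)
  have h2 := (integrableOn_Ioi_comp_mul_left_iff
      (fun x => Real.exp (-x) * x ^ ((n+1:ℝ)-1)) 0 h0).mpr (by simpa using h)
  have h3 := h2.smul (c := (ρ:ℝ) ^ n)
  apply (integrableOn_congr_fun _ measurableSet_Ioi).mp h3
  intro x hx
  have hx0 : (0:ℝ) < x := hx
  have he : ((1/ρ) * x) ^ ((n+1:ℝ)-1) = (x/ρ)^n := by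
    rw [show (n+1:ℝ)-1 = (n:ℝ) by ring, Real.rpow_natCast]
    ring_nf
  simp only [Pi.smul_apply, smul_eq_mul, he]
  rw [div_pow]
  field_simp

lemma EG.intPowVal (hρ : 0 < ρ) (n : ℕ) :
    ∫ x in Set.Ioi (0:ℝ), x ^ n * Real.exp (-x / ρ) = (Nat.factorial n : ℝ) * ρ ^ (n+1) := by
  have h0 : (0:ℝ) < 1/ρ := by positivity
  have h := integral_rpow_mul_exp_neg_mul_Ioi (a := (n+1:ℝ)) (r := 1/ρ) (by positivity) h0
  rw [show ∫ x in Set.Ioi (0:ℝ), x ^ n * Real.exp (-x / ρ)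
      = ∫ t in Set.Ioi (0:ℝ), t ^ ((n+1:ℝ)-1) * Real.exp (-(1/ρ * t)) from ?_, h]
  · rw [one_div_one_div, Real.Gamma_nat_eq_factorial,
      show (n+1:ℝ) = ((n+1:ℕ):ℝ) by push_cast; ring, Real.rpow_natCast]
    ring
  · refine setIntegral_congr_fun measurableSet_Ioi (fun x hx => ?_)
    have hx0 : (0:ℝ) < x := hx
    rw [show (n+1:ℝ)-1 = (n:ℝ) by ring, Real.rpow_natCast]
    ring_nf

lemma EG.tendstoPowExp (hρ : 0 < ρ) (n : ℕ) :
    Tendsto (fun x : ℝ => x ^ n * Real.exp (-x / ρ)) atTop (nhds 0) := by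
  have hcomp : Tendsto (fun x : ℝ => x / ρ) atTop atTop := tendsto_id.atTop_div_const hρ
  have h := ((tendsto_pow_mul_exp_neg_atTop_nhds_zero n).comp hcomp).const_mul (ρ ^ n)
  rw [mul_zero] at h
  refine h.congr (fun x => ?_)
  simp only [Function.comp_apply]
  rw [div_pow, neg_div]
  field_simp

lemma EG.contA (hρ : 0 < ρ) (k : ℕ) :
    ContinuousOn (fun x : ℝ => x ^ k * Real.exp (-x / ρ) / (1 + x)) (Set.Ioi 0) := by
  apply ContinuousOn.div
  · fun_prop
  · fun_prop
  · intro x hx; have : (0:ℝ) < x := hx; positivity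

lemma EG.intA (hρ : 0 < ρ) (k : ℕ) :
    IntegrableOn (fun x : ℝ => x ^ k * Real.exp (-x / ρ) / (1 + x)) (Set.Ioi 0) := by
  refine Integrable.mono (EG.intPow hρ k)
    ((EG.contA hρ k).aestronglyMeasurable measurableSet_Ioi) ?_
  refine (ae_restrict_iff' measurableSet_Ioi).mpr (Filter.Eventually.of_forall fun x hx => ?_)
  have hx0 : (0:ℝ) < x := hx
  have h1 : (1:ℝ) ≤ 1 + x := by linarith
  rw [Real.norm_eq_abs, Real.norm_eq_abs, abs_of_nonneg (by positivity),
    abs_of_nonneg (by positivity)]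
  rw [div_le_iff₀ (by linarith)]
  nlinarith [mul_pos (pow_pos hx0 k) (Real.exp_pos (-x/ρ))]

lemma EG.intJ (hρ : 0 < ρ) (k : ℕ) :
    IntegrableOn (fun x : ℝ => Real.exp (-x / ρ) / (1 + x) ^ (k+1)) (Set.Ioi 0) := by
  have hc : ContinuousOn (fun x : ℝ => Real.exp (-x / ρ) / (1 + x) ^ (k+1)) (Set.Ioi 0) := by
    apply ContinuousOn.div
    · fun_prop
    · fun_prop
    · intro x hx; have : (0:ℝ) < x := hx; positivity
  refine Integrable.mono (by simpa using EG.intPow hρ 0 : IntegrableOn (fun x : ℝ => Real.exp (-x / ρ)) (Set.Ioi 0)).integrable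
    (hc.aestronglyMeasurable measurableSet_Ioi) ?_
  refine (ae_restrict_iff' measurableSet_Ioi).mpr (Filter.Eventually.of_forall fun x hx => ?_)
  have hx0 : (0:ℝ) < x := hx
  have h1 : (1:ℝ) ≤ (1 + x) ^ (k+1) := one_le_pow₀ (by linarith)
  rw [Real.norm_eq_abs, Real.norm_eq_abs, abs_of_nonneg (by positivity),
    abs_of_nonneg (by positivity)]
  rw [div_le_iff₀ (by positivity)]
  nlinarith [Real.exp_pos (-x/ρ)]

lemma EG.logBound {x : ℝ} (hx : 0 ≤ x) : 0 ≤ Real.log (1 + x) ∧ Real.log (1 + x) ≤ x := by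
  constructor
  · exact Real.log_nonneg (by linarith)
  · have := Real.log_le_sub_one_of_pos (x := 1 + x) (by linarith)
    linarith

lemma EG.contL (hρ : 0 < ρ) (n : ℕ) :
    ContinuousOn (fun x : ℝ => Real.log (1 + x) * (x ^ n * Real.exp (-x / ρ))) (Set.Ioi 0) := by
  apply ContinuousOn.mul
  · apply ContinuousOn.log
    · fun_prop
    · intro x hx; have : (0:ℝ) < x := hx; positivity
  · fun_prop

lemma EG.intL (hρ : 0 < ρ) (n : ℕ) :
    IntegrableOn (fun x : ℝ => Real.log (1 + x) * (x ^ n * Real.exp (-x / ρ))) (Set.Ioi 0) := by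
  refine Integrable.mono (EG.intPow hρ (n+1))
    ((EG.contL hρ n).aestronglyMeasurable measurableSet_Ioi) ?_
  refine (ae_restrict_iff' measurableSet_Ioi).mpr (Filter.Eventually.of_forall fun x hx => ?_)
  have hx0 : (0:ℝ) < x := hx
  obtain ⟨hl0, hlx⟩ := EG.logBound hx0.le
  rw [Real.norm_eq_abs, Real.norm_eq_abs, abs_of_nonneg (by positivity),
    abs_of_nonneg (by positivity)]
  calc Real.log (1 + x) * (x ^ n * Real.exp (-x / ρ))
      ≤ x * (x ^ n * Real.exp (-x / ρ)) := by
        apply mul_le_mul_of_nonneg_right hlx (by positivity)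
    _ = x ^ (n+1) * Real.exp (-x / ρ) := by ring

lemma EG.tendstoL (hρ : 0 < ρ) (n : ℕ)
    (hp : Tendsto (fun x : ℝ => x ^ (n+1) * Real.exp (-x / ρ)) atTop (nhds 0)) :
    Tendsto (fun x : ℝ => Real.log (1 + x) * (x ^ n * Real.exp (-x / ρ))) atTop (nhds 0) := by
  refine squeeze_zero' (Filter.eventually_atTop.mpr ⟨0, fun x hx => ?_⟩)
    (Filter.eventually_atTop.mpr ⟨0, fun x hx => ?_⟩) hp
  · obtain ⟨hl0, _⟩ := EG.logBound hx
    positivity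
  · obtain ⟨_, hlx⟩ := EG.logBound hx
    calc Real.log (1 + x) * (x ^ n * Real.exp (-x / ρ))
        ≤ x * (x ^ n * Real.exp (-x / ρ)) := by
          apply mul_le_mul_of_nonneg_right hlx (by positivity)
      _ = x ^ (n+1) * Real.exp (-x / ρ) := by ring

lemma EG.tendstoJ (hρ : 0 < ρ) (k : ℕ)
    (hp : Tendsto (fun x : ℝ => x ^ 0 * Real.exp (-x / ρ)) atTop (nhds 0)) :
    Tendsto (fun x : ℝ => Real.exp (-x / ρ) / (1 + x) ^ (k+1)) atTop (nhds 0) := by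
  have hp' : Tendsto (fun x : ℝ => Real.exp (-x / ρ)) atTop (nhds 0) := by
    refine hp.congr (fun x => by ring)
  refine squeeze_zero' (Filter.eventually_atTop.mpr ⟨0, fun x hx => ?_⟩)
    (Filter.eventually_atTop.mpr ⟨0, fun x hx => ?_⟩) hp'
  · positivity
  · have h1 : (1:ℝ) ≤ (1 + x) ^ (k+1) := one_le_pow₀ (by linarith)
    rw [div_le_iff₀ (by positivity)]
    nlinarith [Real.exp_pos (-x/ρ)]

lemma EG.hasDerivAtExp (hρ : 0 < ρ) (x : ℝ) :
    HasDerivAt (fun x : ℝ => Real.exp (-x / ρ)) (Real.exp (-x / ρ) * (-(1/ρ))) x := by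
  have h : HasDerivAt (fun x : ℝ => -x / ρ) (-(1/ρ)) x := by
    rw [show -(1/ρ) = -1/ρ by ring]
    exact (hasDerivAt_id x).neg.div_const ρ
  exact h.exp

lemma EG.aRec (hρ : 0 < ρ) (k : ℕ) :
    aI ρ (k+1) = (Nat.factorial k : ℝ) * ρ ^ (k+1) - aI ρ k := by
  have h : ∀ x ∈ Set.Ioi (0:ℝ),
      x ^ (k+1) * Real.exp (-x / ρ) / (1 + x)
        = x ^ k * Real.exp (-x / ρ) - x ^ k * Real.exp (-x / ρ) / (1 + x) := by
    intro x hx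
    have hx0 : (0:ℝ) < x := hx
    have h1 : (1:ℝ) + x ≠ 0 := by positivity
    field_simp
    ring
  rw [aI, setIntegral_congr_fun measurableSet_Ioi h,
    integral_sub (EG.intPow hρ k) (EG.intA hρ k), EG.intPowVal hρ k, aI]

lemma EG.jRec (hρ : 0 < ρ) (k : ℕ) :
    ((k:ℝ)+1) * jI ρ (k+1) = 1 - jI ρ k / ρ := by
  set f' : ℝ → ℝ := fun x =>
    (-(1/ρ)) * (Real.exp (-x / ρ) / (1 + x) ^ (k+1))
      + (-((k:ℝ)+1)) * (Real.exp (-x / ρ) / (1 + x) ^ (k+2)) with hf'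
  have hderiv : ∀ x ∈ Set.Ici (0:ℝ),
      HasDerivAt (fun x : ℝ => Real.exp (-x / ρ) / (1 + x) ^ (k+1)) (f' x) x := by
    intro x hx
    have hx0 : (0:ℝ) ≤ x := hx
    have h1 : (1:ℝ) + x ≠ 0 := by positivity
    have hp : HasDerivAt (fun x : ℝ => (1 + x) ^ (k+1))
        ((k+1 : ℕ) * (1 + x) ^ k * 1) x := by
      exact (HasDerivAt.const_add 1 (hasDerivAt_id x)).pow (k+1)
    have hd := (EG.hasDerivAtExp hρ x).div hp (pow_ne_zero _ h1)
    refine hd.congr_deriv ?_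
    rw [hf']
    push_cast
    field_simp
    ring
  have hint : IntegrableOn f' (Set.Ioi 0) := by
    exact ((EG.intJ hρ k).const_mul _).add (((EG.intJ hρ (k+1)).const_mul _))
  have htend := EG.tendstoJ hρ k (EG.tendstoPowExp hρ 0)
  have key := integral_Ioi_of_hasDerivAt_of_tendsto' hderiv hint htend
  have hsplit : ∫ x in Set.Ioi (0:ℝ), f' x
      = (-(1/ρ)) * jI ρ k + (-((k:ℝ)+1)) * jI ρ (k+1) := by
    rw [hf']
    rw [integral_add ((EG.intJ hρ k).const_mul _) ((EG.intJ hρ (k+1)).const_mul _),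
      integral_const_mul, integral_const_mul]
    rfl
  rw [hsplit] at key
  norm_num at key
  field_simp at key ⊢
  linarith

lemma EG.lBase (hρ : 0 < ρ) : lI ρ 0 = ρ * aI ρ 0 := by
  set f' : ℝ → ℝ := fun x =>
    x ^ 0 * Real.exp (-x / ρ) / (1 + x)
      - (1/ρ) * (Real.log (1 + x) * (x ^ 0 * Real.exp (-x / ρ))) with hf'
  have hderiv : ∀ x ∈ Set.Ici (0:ℝ),
      HasDerivAt (fun x : ℝ => Real.log (1 + x) * Real.exp (-x / ρ)) (f' x) x := by
    intro x hx
    have hx0 : (0:ℝ) ≤ x := hx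
    have h1 : (1:ℝ) + x ≠ 0 := by positivity
    have hlog : HasDerivAt (fun x : ℝ => Real.log (1 + x)) (1 / (1 + x)) x := by
      simpa using (HasDerivAt.const_add 1 (hasDerivAt_id x)).log h1
    have hd := hlog.mul (EG.hasDerivAtExp hρ x)
    refine hd.congr_deriv ?_
    rw [hf']
    ring
  have hint : IntegrableOn f' (Set.Ioi 0) := by
    exact (EG.intA hρ 0).sub ((EG.intL hρ 0).const_mul _)
  have htend : Tendsto (fun x : ℝ => Real.log (1 + x) * Real.exp (-x / ρ)) atTop (nhds 0) := by
    have := EG.tendstoL hρ 0 (EG.tendstoPowExp hρ 1)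
    refine this.congr (fun x => by ring)
  have key := integral_Ioi_of_hasDerivAt_of_tendsto' hderiv hint htend
  have hsplit : ∫ x in Set.Ioi (0:ℝ), f' x = aI ρ 0 - (1/ρ) * lI ρ 0 := by
    rw [hf']
    have hIb : IntegrableOn (fun x : ℝ => (1/ρ) * (Real.log (1 + x) * (x ^ 0 * Real.exp (-x / ρ))))
        (Set.Ioi 0) := (EG.intL hρ 0).const_mul _
    rw [integral_sub (EG.intA hρ 0) hIb, integral_const_mul]
    rfl
  rw [hsplit] at key
  norm_num at key
  have hρ' : ρ ≠ 0 := ne_of_gt hρ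
  field_simp at key ⊢
  linarith

lemma EG.lRec (hρ : 0 < ρ) (n : ℕ) :
    lI ρ (n+1) = ρ * (((n:ℝ)+1) * lI ρ n + aI ρ (n+1)) := by
  set f' : ℝ → ℝ := fun x =>
    x ^ (n+1) * Real.exp (-x / ρ) / (1 + x)
      + (((n:ℝ)+1) * (Real.log (1 + x) * (x ^ n * Real.exp (-x / ρ)))
        - (1/ρ) * (Real.log (1 + x) * (x ^ (n+1) * Real.exp (-x / ρ)))) with hf'
  have hderiv : ∀ x ∈ Set.Ici (0:ℝ),
      HasDerivAt (fun x : ℝ => Real.log (1 + x) * (x ^ (n+1) * Real.exp (-x / ρ))) (f' x) x := by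
    intro x hx
    have hx0 : (0:ℝ) ≤ x := hx
    have h1 : (1:ℝ) + x ≠ 0 := by positivity
    have hlog : HasDerivAt (fun x : ℝ => Real.log (1 + x)) (1 / (1 + x)) x := by
      simpa using (HasDerivAt.const_add 1 (hasDerivAt_id x)).log h1
    have hpe : HasDerivAt (fun x : ℝ => x ^ (n+1) * Real.exp (-x / ρ))
        (((n+1:ℕ) * x ^ n) * Real.exp (-x / ρ)
          + x ^ (n+1) * (Real.exp (-x / ρ) * (-(1/ρ)))) x :=
      (hasDerivAt_pow (n+1) x).mul (EG.hasDerivAtExp hρ x)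
    have hd := hlog.mul hpe
    refine hd.congr_deriv ?_
    rw [hf']
    push_cast
    ring
  have hint : IntegrableOn f' (Set.Ioi 0) := by
    exact (EG.intA hρ (n+1)).add
      (((EG.intL hρ n).const_mul _).sub ((EG.intL hρ (n+1)).const_mul _))
  have htend := EG.tendstoL hρ (n+1) (EG.tendstoPowExp hρ (n+2))
  have key := integral_Ioi_of_hasDerivAt_of_tendsto' hderiv hint htend
  have hsplit : ∫ x in Set.Ioi (0:ℝ), f' x
      = aI ρ (n+1) + (((n:ℝ)+1) * lI ρ n - (1/ρ) * lI ρ (n+1)) := by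
    rw [hf']
    have hIa : IntegrableOn (fun x : ℝ =>
        ((n:ℝ)+1) * (Real.log (1 + x) * (x ^ n * Real.exp (-x / ρ)))) (Set.Ioi 0) :=
      (EG.intL hρ n).const_mul _
    have hIb : IntegrableOn (fun x : ℝ =>
        (1/ρ) * (Real.log (1 + x) * (x ^ (n+1) * Real.exp (-x / ρ)))) (Set.Ioi 0) :=
      (EG.intL hρ (n+1)).const_mul _
    have hIab : IntegrableOn (fun x : ℝ =>
        ((n:ℝ)+1) * (Real.log (1 + x) * (x ^ n * Real.exp (-x / ρ)))
          - (1/ρ) * (Real.log (1 + x) * (x ^ (n+1) * Real.exp (-x / ρ)))) (Set.Ioi 0) :=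
      hIa.sub hIb
    rw [integral_add (EG.intA hρ (n+1)) hIab, integral_sub hIa hIb,
      integral_const_mul, integral_const_mul]
    rfl
  rw [hsplit] at key
  norm_num at key
  have hρ' : ρ ≠ 0 := ne_of_gt hρ
  field_simp at key ⊢
  linarith

lemma EG.aEqJ (hρ : 0 < ρ) (k : ℕ) :
    aI ρ k = (Nat.factorial k : ℝ) * ρ ^ k * jI ρ k := by
  induction k with
  | zero =>
    simp only [Nat.factorial_zero, Nat.cast_one, pow_zero, one_mul, mul_one]
    rw [aI, jI]
    refine setIntegral_congr_fun measurableSet_Ioi (fun x hx => ?_)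
    norm_num
  | succ k ih =>
    have hj := EG.jRec hρ k
    have hk1 : ((k:ℝ)+1) ≠ 0 := by positivity
    have hjval : jI ρ (k+1) = (1 - jI ρ k / ρ) / ((k:ℝ)+1) := by
      field_simp at hj ⊢; linarith
    rw [EG.aRec hρ k, ih, hjval]
    have hfact : (Nat.factorial (k+1) : ℝ) = ((k:ℝ)+1) * (Nat.factorial k : ℝ) := by
      rw [Nat.factorial_succ]; push_cast; ring
    rw [hfact]
    have hρ' : ρ ≠ 0 := ne_of_gt hρ
    field_simp
    ring

lemma EG.lFormula (hρ : 0 < ρ) (n : ℕ) :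
    lI ρ n = (Nat.factorial n : ℝ) * ρ ^ (n+1) * ∑ k ∈ Finset.range (n+1), jI ρ k := by
  induction n with
  | zero =>
    simp only [Nat.factorial_zero, Nat.cast_one, pow_one, one_mul, Finset.range_one,
      Finset.sum_singleton]
    rw [EG.lBase hρ, EG.aEqJ hρ 0]
    simp
  | succ n ih =>
    rw [EG.lRec hρ n, ih, EG.aEqJ hρ (n+1), Finset.sum_range_succ (f := fun k => jI ρ k) (n := n+1)]
    have hfact : (Nat.factorial (n+1) : ℝ) = ((n:ℝ)+1) * (Nat.factorial n : ℝ) := by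
      rw [Nat.factorial_succ]; push_cast; ring
    rw [hfact]
    ring

lemma EG.integral_Ioi_comp_add (h : ℝ → ℝ) (a c : ℝ) :
    ∫ x in Set.Ioi a, h (x + c) = ∫ x in Set.Ioi (a + c), h x := by
  rw [← integral_indicator measurableSet_Ioi, ← integral_indicator measurableSet_Ioi]
  rw [← integral_add_right_eq_self (fun x => (Set.Ioi (a + c)).indicator h x) c]
  congr 1
  ext x
  by_cases hx : x ∈ Set.Ioi a
  · have : x + c ∈ Set.Ioi (a + c) := by simp only [Set.mem_Ioi] at hx ⊢; linarith
    rw [Set.indicator_of_mem hx, Set.indicator_of_mem this]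
  · have : x + c ∉ Set.Ioi (a + c) := by simp only [Set.mem_Ioi] at hx ⊢; linarith
    rw [Set.indicator_of_notMem hx, Set.indicator_of_notMem this]

lemma EG.gammaSub (hρ : 0 < ρ) (k : ℕ) :
    Real.exp (1/ρ) * (ρ ^ (-(k:ℤ)) * upperGamma (-(k:ℝ)) (1/ρ)) = jI ρ k := by
  have hρ' : ρ ≠ 0 := ne_of_gt hρ
  have h0 : (0:ℝ) < 1/ρ := by positivity
  set g : ℝ → ℝ := fun t => t ^ ((-(k:ℝ)) - 1) * Real.exp (-t) with hg
  have hscale := integral_comp_mul_left_Ioi g 1 h0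
  rw [mul_one] at hscale
  -- hscale : ∫ x in Ioi 1, g ((1/ρ) * x) = (1/ρ)⁻¹ • ∫ x in Ioi (1/ρ), g x
  have htrans : ∫ x in Set.Ioi (1:ℝ), g ((1/ρ) * x)
      = ∫ x in Set.Ioi (0:ℝ), g ((1/ρ) * (x + 1)) := by
    rw [EG.integral_Ioi_comp_add (fun x => g ((1/ρ) * x)) 0 1, zero_add]
  have hug : upperGamma (-(k:ℝ)) (1/ρ) = ∫ x in Set.Ioi (1/ρ), g x := rfl
  have hΓ : upperGamma (-(k:ℝ)) (1/ρ)
      = (1/ρ) * ∫ x in Set.Ioi (0:ℝ), g ((1/ρ) * (x + 1)) := by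
    rw [hug, ← htrans, hscale]
    simp [smul_eq_mul]
    field_simp
  rw [hΓ, jI]
  rw [show Real.exp (1/ρ) * (ρ ^ (-(k:ℤ)) * ((1/ρ) * ∫ x in Set.Ioi (0:ℝ), g ((1/ρ) * (x + 1))))
      = ∫ x in Set.Ioi (0:ℝ), (Real.exp (1/ρ) * ρ ^ (-(k:ℤ)) * (1/ρ)) * g ((1/ρ) * (x + 1)) from ?_]
  · refine setIntegral_congr_fun measurableSet_Ioi (fun x hx => ?_)
    have hx0 : (0:ℝ) < x := hx
    have hbase : (0:ℝ) < (1/ρ) * (x + 1) := by positivity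
    have h1x : (0:ℝ) < 1 + x := by linarith
    rw [hg]
    simp only
    have hrpow : ((1/ρ) * (x + 1)) ^ ((-(k:ℝ)) - 1)
        = (((1/ρ) * (x + 1)) ^ (k+1 : ℕ))⁻¹ := by
      rw [show (-(k:ℝ)) - 1 = -((k+1 : ℕ) : ℝ) by push_cast; ring,
        Real.rpow_neg hbase.le, Real.rpow_natCast]
    have hzpow : (ρ:ℝ) ^ (-(k:ℤ)) = (ρ ^ k)⁻¹ := by
      rw [zpow_neg, zpow_natCast]
    rw [hrpow, hzpow]
    have hexp2 : Real.exp (-x/ρ) = Real.exp (1/ρ) * Real.exp (-((1/ρ) * (x + 1))) := by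
      rw [← Real.exp_add]
      congr 1
      field_simp
      ring
    rw [hexp2]
    rw [show (1:ℝ) + x = x + 1 by ring]
    rw [mul_pow]
    have hne1 : ((1:ℝ)/ρ) ^ (k+1) ≠ 0 := by positivity
    have hne2 : ((x:ℝ) + 1) ^ (k+1) ≠ 0 := by positivity
    field_simp
    ring
    field_simp
    rw [one_div, inv_pow, mul_inv_cancel₀ (pow_ne_zero _ hρ')]
  · rw [integral_const_mul]
    ring

theorem gamma_expected_log_one_add (N : ℕ) (hN : 1 ≤ N) (ρ : ℝ) (hρ : 0 < ρ) :
    ∫ x in Set.Ioi (0 : ℝ),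
        Real.log (1 + x) * (x ^ (N - 1) * Real.exp (-x / ρ) / (Real.Gamma N * ρ ^ N)) =
      Real.exp (1 / ρ) *
        ∑ k ∈ Finset.range N, ρ ^ (-(k : ℤ)) * upperGamma (-(k : ℝ)) (1 / ρ) := by
  obtain ⟨m, rfl⟩ : ∃ m, N = m + 1 := ⟨N - 1, by omega⟩
  have hm : m + 1 - 1 = m := rfl
  have hΓ : Real.Gamma ((m+1 : ℕ) : ℝ) = (Nat.factorial m : ℝ) := by
    push_cast
    exact Real.Gamma_nat_eq_factorial m
  have hC : (0:ℝ) < (Nat.factorial m : ℝ) * ρ ^ (m+1) := by positivity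
  have hconst : ∀ x : ℝ, Real.log (1 + x) * (x ^ (m + 1 - 1) * Real.exp (-x / ρ)
        / (Real.Gamma ((m+1:ℕ):ℝ) * ρ ^ (m+1)))
      = (Real.log (1 + x) * (x ^ m * Real.exp (-x / ρ)))
        * ((Nat.factorial m : ℝ) * ρ ^ (m+1))⁻¹ := by
    intro x
    rw [hm, hΓ]
    ring
  rw [show (∫ x in Set.Ioi (0 : ℝ),
        Real.log (1 + x) * (x ^ (m + 1 - 1) * Real.exp (-x / ρ)
          / (Real.Gamma ((m+1:ℕ):ℝ) * ρ ^ (m+1))))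
      = ∫ x in Set.Ioi (0 : ℝ), (Real.log (1 + x) * (x ^ m * Real.exp (-x / ρ)))
          * ((Nat.factorial m : ℝ) * ρ ^ (m+1))⁻¹ from by simp only [hconst]]
  rw [integral_mul_const]
  have hL : (∫ x in Set.Ioi (0:ℝ), Real.log (1 + x) * (x ^ m * Real.exp (-x / ρ))) = lI ρ m := rfl
  rw [hL, EG.lFormula hρ m, mul_comm, ← mul_assoc, inv_mul_cancel₀ (ne_of_gt hC), one_mul,
    Finset.mul_sum]
  exact Finset.sum_congr rfl (fun k _ => (EG.gammaSub hρ k).symm)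
end

section
/- If X is a nonnegative random variable such that ln(1+X) is integrable, then E[ln(1+X)] = ∫₀^∞ (e^{−s}/s)(1 − E[e^{−sX}]) ds. -/
/-!
Frullani's integral `log (b / a) = ∫₀^∞ (e^{-as} - e^{-bs}) / s ds` follows from
`(e^{-as} - e^{-bs}) / s = ∫ₐᵇ e^{-ts} dt` by exchanging the two integrals. With `a = 1`,
`b = 1 + X`, taking expectations and exchanging the `ω`- and `s`-integrals once more turns
`E[e^{-(1+X)s}]` into `e^{-s} E[e^{-sX}]`. Both exchanges are done for lower Lebesgue integrals of
nonnegative functions, where Tonelli's theorem needs only measurability.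
-/

open MeasureTheory ProbabilityTheory Set Real
open scoped ENNReal

lemma integral_Ioi_exp_neg_mul {t : ℝ} (ht : 0 < t) :
    ∫ s in Ioi (0 : ℝ), exp (-t * s) = t⁻¹ := by
  rw [integral_exp_mul_Ioi (neg_neg_of_pos ht)]
  simp

lemma integral_Ioc_exp_neg_mul {s : ℝ} (hs : s ≠ 0) {a b : ℝ} (hab : a ≤ b) :
    ∫ t in Ioc a b, exp (-t * s) = (exp (-a * s) - exp (-b * s)) / s := by
  simp_rw [neg_mul, mul_comm _ s, ← neg_mul]
  rw [← intervalIntegral.integral_of_le hab,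
    intervalIntegral.integral_comp_mul_left exp (neg_ne_zero.2 hs), integral_exp,
    smul_eq_mul, inv_neg, neg_mul, div_eq_inv_mul]
  ring

theorem lintegral_Ioi_exp_sub_exp_div {a b : ℝ} (ha : 0 < a) (hab : a ≤ b) :
    ∫⁻ s in Ioi (0 : ℝ), ENNReal.ofReal ((exp (-a * s) - exp (-b * s)) / s) =
      ENNReal.ofReal (log (b / a)) := by
  have hpos : ∀ t ∈ Ioc a b, 0 < t := fun t ht => ha.trans ht.1
  have hexp : ∀ (ν : Measure ℝ) (f : ℝ → ℝ), 0 ≤ᵐ[ν] fun x => exp (f x) :=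
    fun _ _ => ae_of_all _ fun _ => (exp_pos _).le
  calc ∫⁻ s in Ioi (0 : ℝ), ENNReal.ofReal ((exp (-a * s) - exp (-b * s)) / s)
      = ∫⁻ s in Ioi (0 : ℝ), ∫⁻ t in Ioc a b, ENNReal.ofReal (exp (-t * s)) := by
        refine setLIntegral_congr_fun measurableSet_Ioi fun s hs => ?_
        rw [← integral_Ioc_exp_neg_mul hs.ne' hab, ofReal_integral_eq_lintegral_ofReal
          (by fun_prop : Continuous fun t => exp (-t * s)).integrableOn_Ioc (hexp _ _)]
    _ = ∫⁻ t in Ioc a b, ∫⁻ s in Ioi (0 : ℝ), ENNReal.ofReal (exp (-t * s)) :=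
        lintegral_lintegral_swap (by fun_prop)
    _ = ∫⁻ t in Ioc a b, ENNReal.ofReal t⁻¹ := by
        refine setLIntegral_congr_fun measurableSet_Ioc fun t ht => ?_
        rw [← integral_Ioi_exp_neg_mul (hpos t ht), ofReal_integral_eq_lintegral_ofReal
          (exp_neg_integrableOn_Ioi 0 (hpos t ht)) (hexp _ _)]
    _ = ENNReal.ofReal (log (b / a)) := by
        rw [← ofReal_integral_eq_lintegral_ofReal, ← intervalIntegral.integral_of_le hab,
          integral_inv_of_pos ha (ha.trans_le hab)]
        · exact (continuousOn_inv₀.mono fun t ht => (ha.trans_le ht.1).ne').integrableOn_Icc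
            |>.mono_set Ioc_subset_Icc_self
        · exact (ae_restrict_iff' measurableSet_Ioc).2
            (ae_of_all _ fun t ht => (inv_pos.2 (hpos t ht)).le)

section Mgf

variable {Ω : Type*} [MeasurableSpace Ω] {μ : Measure Ω} {X : Ω → ℝ}

lemma measurable_mgf [SFinite μ] (hX : Measurable X) : Measurable (mgf X μ) :=
  (measurable_fst.mul (hX.comp measurable_snd)).exp.stronglyMeasurable
    |>.integral_prod_right' |>.measurable

lemma integrable_exp_mul_of_nonneg_of_nonpos [IsFiniteMeasure μ] (hX : AEMeasurable X μ)
    (hnn : 0 ≤ᵐ[μ] X) {t : ℝ} (ht : t ≤ 0) : Integrable (fun ω => exp (t * X ω)) μ := by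
  refine (integrable_const 1).mono' (by fun_prop) ?_
  filter_upwards [hnn] with ω hω
  rw [norm_of_nonneg (exp_pos _).le, exp_le_one_iff]
  exact mul_nonpos_of_nonpos_of_nonneg ht hω

lemma mgf_le_one_of_nonneg_of_nonpos [IsProbabilityMeasure μ] (hnn : 0 ≤ᵐ[μ] X) {t : ℝ}
    (ht : t ≤ 0) : mgf X μ t ≤ 1 := by
  simpa using mgf_anti_of_nonpos hnn ht (integrable_exp_mul_of_nonneg_of_nonpos
    aemeasurable_const (ae_of_all _ fun _ => le_rfl) ht)

lemma lintegral_exp_sub_exp_div_eq_mgf [IsProbabilityMeasure μ] (hX : AEMeasurable X μ)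
    (hnn : 0 ≤ᵐ[μ] X) {s : ℝ} (hs : 0 < s) :
    ∫⁻ ω, ENNReal.ofReal ((exp (-1 * s) - exp (-(1 + X ω) * s)) / s) ∂μ =
      ENNReal.ofReal (exp (-s) / s * (1 - mgf X μ (-s))) := by
  have hsplit : ∀ ω, (exp (-1 * s) - exp (-(1 + X ω) * s)) / s =
      exp (-s) / s - exp (-s) / s * exp (-s * X ω) := fun ω => by
    rw [show -(1 + X ω) * s = -s + -s * X ω by ring, exp_add]
    ring_nf
  have hint := integrable_exp_mul_of_nonneg_of_nonpos hX hnn (neg_nonpos.2 hs.le)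
  have hint' : Integrable (fun ω => exp (-s) / s - exp (-s) / s * exp (-s * X ω)) μ :=
    (integrable_const _).sub (hint.const_mul _)
  simp_rw [hsplit]
  rw [← ofReal_integral_eq_lintegral_ofReal hint', integral_sub (integrable_const _)
    (hint.const_mul _), integral_const, integral_const_mul]
  · simp [mgf, mul_sub]
  · filter_upwards [hnn] with ω hω
    rw [Pi.zero_apply, sub_nonneg]
    exact mul_le_of_le_one_right (by positivity)
      (exp_le_one_iff.2 (mul_nonpos_of_nonpos_of_nonneg (neg_nonpos.2 hs.le) hω))

end Mgf

theorem hamdi_lemma_general {Ω : Type*} [MeasurableSpace Ω]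
    (μ : Measure Ω) [IsProbabilityMeasure μ] (X : Ω → ℝ) (hX : Measurable X)
    (hnn : ∀ ω, 0 ≤ X ω) :
    ∫ ω, Real.log (1 + X ω) ∂μ =
      ∫ s in Set.Ioi (0 : ℝ),
        (Real.exp (-s) / s) * (1 - ∫ ω, Real.exp (-s * X ω) ∂μ) := by
  have hnn_ae : 0 ≤ᵐ[μ] X := ae_of_all _ hnn
  have hfrullani : ∀ ω, ENNReal.ofReal (log (1 + X ω)) =
      ∫⁻ s in Ioi (0 : ℝ), ENNReal.ofReal ((exp (-1 * s) - exp (-(1 + X ω) * s)) / s) := by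
    intro ω
    rw [lintegral_Ioi_exp_sub_exp_div one_pos (by linarith [hnn ω]), div_one]
  have hintegrand_nonneg : ∀ s ∈ Ioi (0 : ℝ), 0 ≤ exp (-s) / s * (1 - mgf X μ (-s)) :=
    fun s hs => mul_nonneg (div_nonneg (exp_pos _).le (le_of_lt hs))
      (sub_nonneg.2 (mgf_le_one_of_nonneg_of_nonpos hnn_ae (neg_nonpos.2 (le_of_lt hs))))
  have hmgf_meas : Measurable fun s => mgf X μ (-s) := (measurable_mgf hX).comp measurable_neg
  calc ∫ ω, log (1 + X ω) ∂μ = (∫⁻ ω, ENNReal.ofReal (log (1 + X ω)) ∂μ).toReal :=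
        integral_eq_lintegral_of_nonneg_ae
          (ae_of_all _ fun ω => log_nonneg (by linarith [hnn ω]))
          (by fun_prop : Measurable _).aestronglyMeasurable
    _ = (∫⁻ s in Ioi (0 : ℝ), ∫⁻ ω,
          ENNReal.ofReal ((exp (-1 * s) - exp (-(1 + X ω) * s)) / s) ∂μ).toReal := by
        simp_rw [hfrullani]
        rw [lintegral_lintegral_swap (by fun_prop)]
    _ = (∫⁻ s in Ioi (0 : ℝ),
          ENNReal.ofReal (exp (-s) / s * (1 - mgf X μ (-s)))).toReal := by
        rw [setLIntegral_congr_fun measurableSet_Ioi fun s hs =>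
          lintegral_exp_sub_exp_div_eq_mgf hX.aemeasurable hnn_ae hs]
    _ = ∫ s in Ioi (0 : ℝ), exp (-s) / s * (1 - ∫ ω, exp (-s * X ω) ∂μ) :=
        (integral_eq_lintegral_of_nonneg_ae
          ((ae_restrict_iff' measurableSet_Ioi).2 (ae_of_all _ hintegrand_nonneg))
          (by fun_prop : Measurable _).aestronglyMeasurable).symm

theorem hamdi_lemma {Ω : Type*} [MeasurableSpace Ω]
    (μ : Measure Ω) [IsProbabilityMeasure μ] (X : Ω → ℝ) (hX : Measurable X)
    (hnn : ∀ ω, 0 ≤ X ω)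
    (hint : Integrable (fun ω => Real.log (1 + X ω)) μ) :
    ∫ ω, Real.log (1 + X ω) ∂μ =
      ∫ s in Set.Ioi (0 : ℝ),
        (Real.exp (-s) / s) * (1 - ∫ ω, Real.exp (-s * X ω) ∂μ) :=
  hamdi_lemma_general μ X hX hnn
end

section
/- Let γ₁, γ₂ be independent integrable nonnegative random variables such that ln(1 + γ₁ + γ₂) is integrable. Then E[ln(1+γ₁+γ₂)] ≥ ln(1 + e^{E[ln γ₁]} + e^{E[ln γ₂]}), provided ln γ₁ and ln γ₂ are integrable. -/
/-!
The function `(x, y) ↦ log (1 + exp x + exp y)` is a log-sum-exp, hence convex, so Jensen's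
inequality applied to the random vector `(log γ₁, log γ₂)` gives the bound.
-/

open MeasureTheory ProbabilityTheory Real Set

theorem convexOn_log_sum_exp {ι : Type*} [Fintype ι] [Nonempty ι] :
    ConvexOn ℝ univ (fun x : ι → ℝ => log (∑ i, exp (x i))) := by
  refine ⟨convex_univ, fun x _ y _ a b ha hb hab => ?_⟩
  set A := ∑ i, exp (x i)
  set B := ∑ i, exp (y i)
  have hA : 0 < A := Finset.sum_pos (fun i _ => exp_pos _) Finset.univ_nonempty
  have hB : 0 < B := Finset.sum_pos (fun i _ => exp_pos _) Finset.univ_nonempty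
  -- Hölder's inequality `∑ uᵢ^a vᵢ^b ≤ (∑ uᵢ)^a (∑ vᵢ)^b`, from convexity of `exp` after normalising.
  have holder : ∑ i, exp (a * x i + b * y i) ≤ exp (a * log A + b * log B) := by
    have hterm : ∀ i, exp (a * x i + b * y i) ≤
        (a * (exp (x i) / A) + b * (exp (y i) / B)) * exp (a * log A + b * log B) := by
      intro i
      have h := convexOn_exp.2 (mem_univ (x i - log A)) (mem_univ (y i - log B)) ha hb hab
      simp only [smul_eq_mul, exp_sub, exp_log hA, exp_log hB] at h
      calc exp (a * x i + b * y i)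
          = exp (a * (x i - log A) + b * (y i - log B)) * exp (a * log A + b * log B) := by
            rw [← exp_add]; ring_nf
        _ ≤ _ := by gcongr
    calc ∑ i, exp (a * x i + b * y i)
        ≤ ∑ i, (a * (exp (x i) / A) + b * (exp (y i) / B)) * exp (a * log A + b * log B) :=
          Finset.sum_le_sum fun i _ => hterm i
      _ = (a * (A / A) + b * (B / B)) * exp (a * log A + b * log B) := by
          rw [← Finset.sum_mul, Finset.sum_add_distrib, ← Finset.mul_sum, ← Finset.mul_sum,
            ← Finset.sum_div, ← Finset.sum_div]
      _ = exp (a * log A + b * log B) := by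
          rw [div_self hA.ne', div_self hB.ne', mul_one, mul_one, hab, one_mul]
  simpa only [Pi.add_apply, Pi.smul_apply, smul_eq_mul] using
    (log_le_iff_le_exp (Finset.sum_pos (fun i _ => exp_pos _) Finset.univ_nonempty)).2 holder

theorem convexOn_log_one_add_exp_add_exp :
    ConvexOn ℝ univ (fun p : ℝ × ℝ => log (1 + exp p.1 + exp p.2)) := by
  let embed : ℝ × ℝ →ₗ[ℝ] Fin 3 → ℝ :=
    LinearMap.pi ![0, LinearMap.fst ℝ ℝ ℝ, LinearMap.snd ℝ ℝ ℝ]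
  have h := convexOn_log_sum_exp.comp_linearMap embed
  simpa [embed, Function.comp_def, Fin.sum_univ_three] using h

theorem log_one_add_exp_integral_add_exp_integral_le {Ω : Type*} [MeasurableSpace Ω]
    {μ : Measure Ω} [IsProbabilityMeasure μ] {X Y : Ω → ℝ}
    (hX : Integrable X μ) (hY : Integrable Y μ)
    (hXY : Integrable (fun ω => log (1 + exp (X ω) + exp (Y ω))) μ) :
    log (1 + exp (∫ ω, X ω ∂μ) + exp (∫ ω, Y ω ∂μ)) ≤
      ∫ ω, log (1 + exp (X ω) + exp (Y ω)) ∂μ := by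
  have hcont : Continuous fun p : ℝ × ℝ => log (1 + exp p.1 + exp p.2) :=
    Continuous.log (by fun_prop) fun p => by positivity
  have h := convexOn_log_one_add_exp_add_exp.map_integral_le hcont.continuousOn isClosed_univ
    (.of_forall fun _ => mem_univ _) (hX.prodMk hY) hXY
  rwa [integral_pair hX hY] at h

theorem jensen_lower_bound_general {Ω : Type*} [MeasurableSpace Ω]
    (μ : Measure Ω) [IsProbabilityMeasure μ] (γ₁ γ₂ : Ω → ℝ)
    (hpos₁ : ∀ ω, 0 < γ₁ ω) (hpos₂ : ∀ ω, 0 < γ₂ ω)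
    (hlog₁ : Integrable (fun ω => Real.log (γ₁ ω)) μ)
    (hlog₂ : Integrable (fun ω => Real.log (γ₂ ω)) μ)
    (hlogsum : Integrable (fun ω => Real.log (1 + γ₁ ω + γ₂ ω)) μ) :
    ∫ ω, Real.log (1 + γ₁ ω + γ₂ ω) ∂μ ≥
      Real.log (1 + Real.exp (∫ ω, Real.log (γ₁ ω) ∂μ)
        + Real.exp (∫ ω, Real.log (γ₂ ω) ∂μ)) := by
  have hexp_log : ∀ ω, log (1 + exp (log (γ₁ ω)) + exp (log (γ₂ ω))) = log (1 + γ₁ ω + γ₂ ω) :=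
    fun ω => by rw [exp_log (hpos₁ ω), exp_log (hpos₂ ω)]
  have h := log_one_add_exp_integral_add_exp_integral_le hlog₁ hlog₂
    (by simpa only [hexp_log] using hlogsum)
  simpa only [hexp_log] using h

theorem jensen_lower_bound {Ω : Type*} [MeasurableSpace Ω]
    (μ : Measure Ω) [IsProbabilityMeasure μ] (γ₁ γ₂ : Ω → ℝ)
    (hmeas₁ : Measurable γ₁) (hmeas₂ : Measurable γ₂)
    (hindep : IndepFun γ₁ γ₂ μ)
    (hpos₁ : ∀ ω, 0 < γ₁ ω) (hpos₂ : ∀ ω, 0 < γ₂ ω)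
    (hint₁ : Integrable γ₁ μ) (hint₂ : Integrable γ₂ μ)
    (hlog₁ : Integrable (fun ω => Real.log (γ₁ ω)) μ)
    (hlog₂ : Integrable (fun ω => Real.log (γ₂ ω)) μ)
    (hlogsum : Integrable (fun ω => Real.log (1 + γ₁ ω + γ₂ ω)) μ) :
    ∫ ω, Real.log (1 + γ₁ ω + γ₂ ω) ∂μ ≥
      Real.log (1 + Real.exp (∫ ω, Real.log (γ₁ ω) ∂μ)
        + Real.exp (∫ ω, Real.log (γ₂ ω) ∂μ)) :=
  jensen_lower_bound_general μ γ₁ γ₂ hpos₁ hpos₂ hlog₁ hlog₂ hlogsum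
end
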